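/- Every subfield of a CM-field is either a totally real number field or itself a CM-field. -/

import Mathlib

set_option linter.unusedSectionVars false

section Aux

variable {K : Type*} [Field K] [NumberField K]

theorem extend_hom {E : Type*} [Field E] (i : E →+* K) (φ : E →+* ℂ) :
    ∃ σ : K →+* ℂ, ∀ x, σ (i x) = φ x := by
  letI : Algebra E K := i.toAlgebra
  haveI : CharZero E := i.charZero
  haveI : IsScalarTower ℚ E K := IsScalarTower.of_algebraMap_eq (fun x => by
    rw [show algebraMap ℚ K = (algebraMap E K).comp (algebraMap ℚ E) from Subsingleton.elim _ _]
    rfl)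
  haveI : Algebra.IsAlgebraic ℚ K := Algebra.IsAlgebraic.of_finite ℚ K
  haveI : Algebra.IsAlgebraic E K := Algebra.IsAlgebraic.tower_top (K := ℚ) E
  letI : Algebra E ℂ := φ.toAlgebra
  exact ⟨(IsAlgClosed.lift : K →ₐ[E] ℂ).toRingHom, fun x => (IsAlgClosed.lift : K →ₐ[E] ℂ).commutes x⟩

theorem mem_of_embeddings_agree (F : Subfield K) (y : K)
    (h : ∀ σ τ : K →+* ℂ, (∀ z ∈ F, σ z = τ z) → σ y = τ y) : y ∈ F := by
  haveI : IsScalarTower ℚ F K := IsScalarTower.of_algebraMap_eq (fun x => by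
    rw [show algebraMap ℚ K = (algebraMap F K).comp (algebraMap ℚ F) from Subsingleton.elim _ _]
    rfl)
  haveI : Algebra.IsAlgebraic ℚ K := Algebra.IsAlgebraic.of_finite ℚ K
  haveI : Algebra.IsAlgebraic F K := Algebra.IsAlgebraic.tower_top (K := ℚ) F
  let σ₀ : K →+* ℂ := (IsAlgClosed.lift (R := ℚ) (S := K) (M := ℂ)).toRingHom
  letI : Algebra F ℂ := (σ₀.comp (algebraMap F K)).toAlgebra
  haveI : NoZeroSMulDivisors (↥F) ℂ :=
    GroupWithZero.toNoZeroSMulDivisors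
  have hy : IsIntegral F y := (Algebra.IsAlgebraic.isAlgebraic y).isIntegral
  set p := minpoly F y with hp
  have hsep : p.Separable := Algebra.IsSeparable.isSeparable F y
  have hsplit : (p.map (algebraMap (↥F) ℂ)).Splits := IsAlgClosed.splits _
  have hcard : Fintype.card (p.rootSet ℂ) = p.natDegree :=
    Polynomial.card_rootSet_eq_natDegree hsep hsplit
  -- each root gives an embedding
  have key : ∀ r ∈ p.rootSet ℂ, ∃ σ : K →+* ℂ, σ y = r ∧ ∀ z ∈ F, σ z = σ₀ z := by
    intro r hr
    have hr' : r ∈ p.aroots ℂ := by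
      rw [Polynomial.mem_rootSet] at hr
      exact (Polynomial.mem_aroots).mpr ⟨hr.1, hr.2⟩
    let ψ := (IntermediateField.algHomAdjoinIntegralEquiv F hy).symm ⟨r, hr'⟩
    obtain ⟨σ, hσ⟩ := extend_hom (algebraMap (IntermediateField.adjoin F {y}) K) ψ.toRingHom
    refine ⟨σ, ?_, ?_⟩
    · have h1 := hσ (IntermediateField.AdjoinSimple.gen F y)
      have h2 : ψ (IntermediateField.AdjoinSimple.gen F y) = r := by
        simp only [ψ]
        rw [IntermediateField.algHomAdjoinIntegralEquiv_symm_apply_gen]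
      rw [IntermediateField.AdjoinSimple.algebraMap_gen] at h1
      rw [← h2]; exact h1
    · intro z hz
      have := hσ (algebraMap F (IntermediateField.adjoin F {y}) ⟨z, hz⟩)
      simp [ψ.commutes] at this
      exact this
  have hone : p.natDegree = 1 := by
    have hpos : 0 < p.natDegree := minpoly.natDegree_pos hy
    have hle : Fintype.card (p.rootSet ℂ) ≤ 1 := by
      rw [Fintype.card_le_one_iff]
      rintro ⟨r₁, hr₁⟩ ⟨r₂, hr₂⟩
      obtain ⟨σ₁, hσ₁y, hσ₁⟩ := key r₁ hr₁
      obtain ⟨σ₂, hσ₂y, hσ₂⟩ := key r₂ hr₂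
      have : σ₁ y = σ₂ y := h σ₁ σ₂ (fun z hz => by rw [hσ₁ z hz, hσ₂ z hz])
      exact Subtype.ext (show r₁ = r₂ by rw [← hσ₁y, ← hσ₂y, this])
    omega
  have hdeg : p.degree = 1 := by
    rw [show ((1:WithBot ℕ)) = ((1:ℕ):WithBot ℕ) from rfl,
      Polynomial.degree_eq_iff_natDegree_eq (minpoly.ne_zero hy)]
    exact hone
  obtain ⟨z, hz⟩ := (minpoly.degree_eq_one_iff).mp hdeg
  rw [← hz]
  exact z.2


theorem exists_alpha [CharZero K] (K₀ : Subfield K) (h2 : Module.finrank K₀ K = 2) :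
    ∃ α : K, α ∉ K₀ ∧ α ^ 2 ∈ K₀ ∧ ∀ x : K, ∃ a b : K₀, x = a + b * α := by
  haveI : FiniteDimensional K₀ K := FiniteDimensional.of_finrank_eq_succ h2
  -- find an element outside K₀
  obtain ⟨β, hβ⟩ : ∃ β : K, β ∉ K₀ := by
    by_contra h
    push_neg at h
    have hle : Module.finrank K₀ K ≤ 1 := by
      apply finrank_le_one (1 : K)
      intro w
      exact ⟨⟨w, h w⟩, mul_one w⟩
    omega
  have hcoe : ∀ (s : K₀) (x : K), s • x = (s : K) * x := fun _ _ => rfl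
  -- {1, β} is linearly independent over K₀
  have li : ∀ γ : K, γ ∉ K₀ → LinearIndependent K₀ ![(1 : K), γ] := by
    intro γ hγ
    rw [LinearIndependent.pair_iff]
    intro s t hst
    rw [hcoe, hcoe, mul_one] at hst
    by_cases ht : t = 0
    · subst ht
      push_cast at hst
      simp only [ZeroMemClass.coe_zero, zero_mul, add_zero] at hst
      exact ⟨by exact_mod_cast hst, rfl⟩
    · exfalso
      apply hγ
      have htK : (t : K) ≠ 0 := fun h => ht (by exact_mod_cast h)
      have : γ = ((-s / t : K₀) : K) := by
        push_cast
        rw [eq_div_iff htK]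
        linear_combination hst
      rw [this]
      exact SetLike.coe_mem _
  -- hence a basis, giving spanning
  have hspan : ∀ γ : K, γ ∉ K₀ → ∀ x : K, ∃ a b : K₀, x = a + b * γ := by
    intro γ hγ x
    have hx : x ∈ Submodule.span K₀ {(1 : K), γ} := by
      have hsp := (basisOfLinearIndependentOfCardEqFinrank (li γ hγ) (by simp [h2])).span_eq
      rw [coe_basisOfLinearIndependentOfCardEqFinrank] at hsp
      rw [show ({(1 : K), γ} : Set K) = Set.range ![(1 : K), γ] by
        simp [Matrix.range_cons, Matrix.range_empty, Set.pair_comm]]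
      rw [hsp]
      trivial
    obtain ⟨a, b, hab⟩ := Submodule.mem_span_pair.mp hx
    exact ⟨a, b, by rw [← hab, hcoe, hcoe, mul_one]⟩
  -- β² = c + d β
  obtain ⟨c, d, hcd⟩ := hspan β hβ (β ^ 2)
  have h2mem : (2 : K) ∈ K₀ := by exact_mod_cast natCast_mem K₀ 2
  have h4mem : (4 : K) ∈ K₀ := by exact_mod_cast natCast_mem K₀ 4
  have hout : (2 * β - (d : K)) ∉ K₀ := by
    intro h
    apply hβ
    have hb : β = ((2 * β - (d : K)) + (d : K)) / 2 := by
      rw [eq_div_iff (two_ne_zero (α := K))]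
      ring
    rw [hb]
    exact Subfield.div_mem _ (Subfield.add_mem _ h (SetLike.coe_mem d)) h2mem
  refine ⟨2 * β - (d : K), hout, ?_, hspan _ hout⟩
  have hsq : (2 * β - (d : K)) ^ 2 = 4 * (c : K) + (d : K) ^ 2 := by
    linear_combination 4 * hcd
  rw [hsq]
  exact Subfield.add_mem _ (Subfield.mul_mem _ h4mem (SetLike.coe_mem c))
    (Subfield.pow_mem _ (SetLike.coe_mem d) 2)

end Aux

/-- A field is totally real if every embedding into ℂ has real image. -/
def IsTotallyRealField (F : Type*) [Field F] : Prop :=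
  ∀ φ : F →+* ℂ, ∀ x : F, (φ x).im = 0

/-- A CM-field: a totally imaginary field which is a quadratic extension of a totally
real subfield. -/
def IsCMField (F : Type*) [Field F] : Prop :=
  (∀ φ : F →+* ℂ, ∃ x : F, (φ x).im ≠ 0) ∧
    ∃ F₀ : Subfield F, IsTotallyRealField F₀ ∧ Module.finrank F₀ F = 2

/-- Every subfield of a CM-field is either totally real or a CM-field. -/
theorem stmt_7 (K : Type*) [Field K] [NumberField K] (hK : IsCMField K)
    (F : Subfield K) : IsTotallyRealField F ∨ IsCMField F := by
  obtain ⟨himag, K₀, hK₀, hrk⟩ := hK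
  obtain ⟨α, hαnm, hα2, hdec⟩ := exists_alpha K₀ hrk
  have hreal : ∀ (σ : K →+* ℂ) (p : K), p ∈ K₀ → (σ p).im = 0 :=
    fun σ p hp => hK₀ (σ.comp K₀.subtype) ⟨p, hp⟩
  -- σ α is purely imaginary for every embedding σ
  have hαim : ∀ σ : K →+* ℂ, (σ α).re = 0 ∧ (σ α).im ≠ 0 := by
    intro σ
    have h1 : ((σ α) * (σ α)).im = 0 := by
      rw [← map_mul, ← sq]; exact hreal σ _ hα2
    have h2 : (σ α).im ≠ 0 := by
      intro h0
      obtain ⟨x, hx⟩ := himag σ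
      obtain ⟨a, b, rfl⟩ := hdec x
      apply hx
      have ha := hreal σ a a.2
      have hb := hreal σ b b.2
      rw [map_add, map_mul]
      simp [Complex.add_im, Complex.mul_im, ha, hb, h0]
    have h3 : (σ α).re = 0 := by
      rw [Complex.mul_im] at h1
      rcases mul_eq_zero.mp (by linarith [h1] : 2 * ((σ α).re * (σ α).im) = 0) with h | h
      · norm_num at h
      · rcases mul_eq_zero.mp h with h' | h'
        · exact h'
        · exact absurd h' h2
    exact ⟨h3, h2⟩
  -- conjugation formula
  have hconj : ∀ (ρ : K →+* ℂ) (p q : K₀),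
      ρ ((p : K) - (q : K) * α) = (starRingEnd ℂ) (ρ ((p : K) + (q : K) * α)) := by
    intro ρ p q
    have ha : (starRingEnd ℂ) (ρ (p : K)) = ρ (p : K) :=
      Complex.conj_eq_iff_im.mpr (hreal ρ p p.2)
    have hb : (starRingEnd ℂ) (ρ (q : K)) = ρ (q : K) :=
      Complex.conj_eq_iff_im.mpr (hreal ρ q q.2)
    have hz : (starRingEnd ℂ) (ρ α) = - ρ α := by
      apply Complex.ext <;> simp [(hαim ρ).1]
    rw [map_sub, map_add, map_mul, map_add, map_mul, ha, hb, hz]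
    ring
  -- closure of F under "conjugation"
  have hcF : ∀ p q : K₀, ((p : K) + (q : K) * α) ∈ F → ((p : K) - (q : K) * α) ∈ F := by
    intro p q hin
    apply mem_of_embeddings_agree F
    intro σ τ hagree
    rw [hconj σ p q, hconj τ p q, hagree _ hin]
  -- if F has a real embedding then F ⊆ K₀
  have hsub : (∃ φ : F →+* ℂ, ∀ x : F, (φ x).im = 0) → ∀ x ∈ F, x ∈ K₀ := by
    rintro ⟨φ, hφ⟩ x hx
    obtain ⟨σ, hσ⟩ := extend_hom F.subtype φ
    obtain ⟨a, b, hab⟩ := hdec x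
    have him : (σ x).im = 0 := by
      have h := hφ ⟨x, hx⟩
      rw [← hσ ⟨x, hx⟩] at h
      exact h
    have hb : (b : K) = 0 := by
      have h1 := hreal σ a a.2
      have h2 := hreal σ b b.2
      obtain ⟨hz1, hz2⟩ := hαim σ
      rw [hab, map_add, map_mul] at him
      simp only [Complex.add_im, Complex.mul_im, h1, h2, hz1, zero_add, mul_zero,
        add_zero, zero_mul] at him
      have hbre : (σ (b : K)).re = 0 := by
        rcases mul_eq_zero.mp him with h | h
        · exact h
        · exact absurd h hz2
      have : σ (b : K) = 0 := Complex.ext hbre h2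
      exact σ.injective (by rw [this, map_zero])
    rw [hab, hb, zero_mul, add_zero]
    exact a.2
  have htr : (∀ x ∈ F, x ∈ K₀) → IsTotallyRealField F := by
    intro hFK₀ φ x
    obtain ⟨σ, hσ⟩ := extend_hom F.subtype φ
    rw [← hσ x]
    exact hreal σ x (hFK₀ x x.2)
  by_cases hF : IsTotallyRealField F
  · exact Or.inl hF
  right
  refine ⟨?_, K₀.comap F.subtype, ?_, ?_⟩
  · intro φ
    by_contra hc
    push_neg at hc
    exact hF (htr (hsub ⟨φ, hc⟩))
  · -- the fixed subfield is totally real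
    intro ψ x
    obtain ⟨σ, hσ⟩ := extend_hom ((F.subtype).comp (K₀.comap F.subtype).subtype) ψ
    rw [← hσ x]
    exact hreal σ _ x.2
  · -- finrank = 2
    obtain ⟨x₀, hx₀F, hx₀K⟩ : ∃ x₀, x₀ ∈ F ∧ x₀ ∉ K₀ := by
      by_contra h
      push_neg at h
      exact hF (htr h)
    obtain ⟨a₀, b₀, hab₀⟩ := hdec x₀
    have hb₀ : (b₀ : K) ≠ 0 := by
      intro h
      apply hx₀K
      rw [hab₀, h, zero_mul, add_zero]
      exact a₀.2
    have hy₀F : ((a₀ : K) - (b₀ : K) * α) ∈ F := hcF a₀ b₀ (hab₀ ▸ hx₀F)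
    have h2F : (2 : K) ∈ F := by exact_mod_cast natCast_mem F 2
    have ha₀F : (a₀ : K) ∈ F := by
      have : (a₀ : K) = (x₀ + ((a₀ : K) - (b₀ : K) * α)) / 2 := by
        rw [hab₀]; rw [eq_div_iff (two_ne_zero (α := K))]; ring
      rw [this]
      exact Subfield.div_mem _ (Subfield.add_mem _ hx₀F hy₀F) h2F
    set β := (b₀ : K) * α with hβdef
    have hβF : β ∈ F := by
      have : β = x₀ - (a₀ : K) := by rw [hab₀]; ring
      rw [this]
      exact Subfield.sub_mem _ hx₀F ha₀F
    have hβK₀ : β ∉ K₀ := by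
      intro h
      apply hαnm
      have : α = β / (b₀ : K) := by
        rw [hβdef]; field_simp
      rw [this]
      exact Subfield.div_mem _ h b₀.2
    have hβne : β ≠ 0 := fun h => hβK₀ (h ▸ Subfield.zero_mem K₀)
    -- the candidate basis of F over F₀
    set F₀ := K₀.comap F.subtype with hF₀def
    have hcoeF : ∀ (s : F₀) (x : F), s • x = ((s : F) : F) * x := fun _ _ => rfl
    set B : F := ⟨β, hβF⟩ with hBdef
    -- linear independence
    have li : LinearIndependent F₀ ![(1 : F), B] := by
      rw [LinearIndependent.pair_iff]
      intro s t hst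
      have hstK : ((s : F) : K) + ((t : F) : K) * β = 0 := by
        have := congrArg (F.subtype) hst
        simpa [hcoeF] using this
      have ht : ((t : F) : K) = 0 := by
        by_contra ht
        apply hβK₀
        have : β = ((-(s : F)/(t : F) : F) : K) := by
          push_cast
          rw [eq_div_iff ht]
          linear_combination hstK
        rw [this]
        have hs' : ((s : F) : K) ∈ K₀ := s.2
        have ht' : ((t : F) : K) ∈ K₀ := t.2
        push_cast
        exact Subfield.div_mem _ (Subfield.neg_mem _ hs') ht'
      have ht0 : t = 0 := by
        apply Subtype.ext; apply Subtype.ext; exact_mod_cast ht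
      subst ht0
      refine ⟨?_, rfl⟩
      apply Subtype.ext; apply Subtype.ext
      simpa [ht] using hstK
    -- spanning
    have hspan : ∀ x : F, ∃ s t : F₀, x = s • (1 : F) + t • B := by
      intro x
      obtain ⟨p, q, hpq⟩ := hdec (x : K)
      have hxF : ((p : K) + (q : K) * α) ∈ F := hpq ▸ x.2
      have hyF : ((p : K) - (q : K) * α) ∈ F := hcF p q hxF
      have hpF : (p : K) ∈ F := by
        have : (p : K) = (((p : K) + (q : K) * α) + ((p : K) - (q : K) * α)) / 2 := by
          rw [eq_div_iff (two_ne_zero (α := K))]; ring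
        rw [this]
        exact Subfield.div_mem _ (Subfield.add_mem _ hxF hyF) h2F
      have hqαF : (q : K) * α ∈ F := by
        have : (q : K) * α = ((p : K) + (q : K) * α) - (p : K) := by ring
        rw [this]
        exact Subfield.sub_mem _ hxF hpF
      have htF : (q : K) / (b₀ : K) ∈ F := by
        have : (q : K) / (b₀ : K) = ((q : K) * α) / β := by
          rw [hβdef]
          rw [div_eq_div_iff hb₀ (by rw [← hβdef]; exact hβne)]
          ring
        rw [this]
        exact Subfield.div_mem _ hqαF hβF
      have htK : (q : K) / (b₀ : K) ∈ K₀ := Subfield.div_mem _ q.2 b₀.2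
      refine ⟨⟨⟨(p : K), hpF⟩, p.2⟩, ⟨⟨(q : K) / (b₀ : K), htF⟩, htK⟩, ?_⟩
      apply Subtype.ext
      show (x : K) = _
      rw [hpq]
      have : ((⟨⟨(p : K), hpF⟩, p.2⟩ : F₀) • (1 : F) + (⟨⟨(q : K)/(b₀ : K), htF⟩, htK⟩ : F₀) • B : F)
          = (⟨(p : K) + ((q : K)/(b₀ : K)) * β, by
              exact Subfield.add_mem _ hpF (Subfield.mul_mem _ htF hβF)⟩ : F) := by
        apply Subtype.ext
        simp [hcoeF, hBdef]
      rw [this]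
      show (p : K) + (q : K) * α = (p : K) + ((q : K)/(b₀ : K)) * β
      rw [hβdef]
      field_simp
    have hspan' : ⊤ ≤ Submodule.span F₀ (Set.range ![(1 : F), B]) := by
      intro x _
      obtain ⟨s, t, hst⟩ := hspan x
      rw [show Set.range ![(1 : F), B] = {(1 : F), B} by
        simp [Matrix.range_cons, Matrix.range_empty, Set.pair_comm]]
      rw [hst]
      exact Submodule.add_mem _
        (Submodule.smul_mem _ _ (Submodule.subset_span (by simp)))
        (Submodule.smul_mem _ _ (Submodule.subset_span (by simp)))
    let Bas : Module.Basis (Fin 2) F₀ F := Module.Basis.mk li hspan'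
    have := Module.finrank_eq_card_basis Bas
    simpa using this
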